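/- Let (X,S) be an association scheme, (Y,T) a 3-equivalenced association scheme, x₀ ∈ X and y₀ ∈ Y. For every central primitive idempotent e of the Terwilliger algebra T(X,S,x₀) with e ≠ ∑_{s∈S} n_s^{-1} ε_{x₀s} J_X ε_{x₀s} (the trivial central primitive idempotent), the Kronecker product e ⊗ ε_{{y₀}} ∈ Mat_{X×Y}(ℂ) is a central primitive idempotent of the Terwilliger algebra T(S≀T) of the wreath product at (x₀,y₀). -/

import Mathlib

open Matrix BigOperators Kronecker
open scoped Classical

section Defs

variable {Z : Type*} [Fintype Z] [DecidableEq Z]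

/-- The identity (diagonal) relation on `Z`. -/
def diagRel (Z : Type*) [Fintype Z] [DecidableEq Z] : Finset (Z × Z) :=
  Finset.univ.filter fun p => p.1 = p.2

/-- The converse relation. -/
def convRel (s : Finset (Z × Z)) : Finset (Z × Z) := s.image fun p => (p.2, p.1)

/-- The intersection number `p_{st}^u`, computed at an arbitrary pair of `u`. -/
noncomputable def pNum (s t u : Finset (Z × Z)) : ℕ :=
  if h : u.Nonempty then
    (Finset.univ.filter fun z => (h.choose.1, z) ∈ s ∧ (z, h.choose.2) ∈ t).card
  else 0

/-- The valency `n_s = p_{s s*}^{1}`. -/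
noncomputable def valency (s : Finset (Z × Z)) : ℕ := pNum s (convRel s) (diagRel Z)

/-- The adjacency matrix of a relation. -/
def adjMat (s : Finset (Z × Z)) : Matrix Z Z ℂ :=
  Matrix.of fun x y => if (x, y) ∈ s then 1 else 0

/-- The diagonal 0/1 matrix of a subset. -/
def eps (U : Finset Z) : Matrix Z Z ℂ := Matrix.diagonal fun i => if i ∈ U then 1 else 0

/-- The all-ones matrix. -/
def allOnes (Z : Type*) : Matrix Z Z ℂ := Matrix.of fun _ _ => 1

/-- `pointFiber x s = xs = {y : (x,y) ∈ s}`. -/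
def pointFiber (x : Z) (s : Finset (Z × Z)) : Finset Z :=
  Finset.univ.filter fun y => (x, y) ∈ s

/-- An association scheme on a finite set `Z`: a partition of `Z × Z` into nonempty
relations containing the identity relation, closed under converse, and with
well-defined intersection numbers. -/
structure AssocScheme (Z : Type*) [Fintype Z] [DecidableEq Z] where
  rels : Finset (Finset (Z × Z))
  nonempty_mem : ∀ s ∈ rels, s.Nonempty
  cover : ∀ p : Z × Z, ∃ s ∈ rels, p ∈ s
  pairwise_disjoint : ∀ s ∈ rels, ∀ t ∈ rels, s ≠ t → Disjoint s t
  id_mem : diagRel Z ∈ rels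
  conv_mem : ∀ s ∈ rels, convRel s ∈ rels
  pconst : ∀ s ∈ rels, ∀ t ∈ rels, ∀ u ∈ rels, ∀ p ∈ u, ∀ q ∈ u,
    (Finset.univ.filter fun z => (p.1, z) ∈ s ∧ (z, p.2) ∈ t).card =
    (Finset.univ.filter fun z => (q.1, z) ∈ s ∧ (z, q.2) ∈ t).card

/-- A scheme is 3-equivalenced when it has more than one point and every
non-identity basic relation has valency 3. -/
def ThreeEquivalenced (B : AssocScheme Z) : Prop :=
  1 < Fintype.card Z ∧ ∀ t ∈ B.rels, t ≠ diagRel Z → valency t = 3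

/-- A scheme is k-equivalenced when it has more than one point and every
non-identity basic relation has valency k. -/
def KEquivalenced (B : AssocScheme Z) (k : ℕ) : Prop :=
  1 < Fintype.card Z ∧ ∀ t ∈ B.rels, t ≠ diagRel Z → valency t = k

/-- A scheme is imprimitive if some union of basic relations is an equivalence
relation different from the identity relation and from the full relation. -/
def Imprimitive (B : AssocScheme Z) : Prop :=
  ∃ R ⊆ B.rels, Equivalence (fun x y : Z => (x, y) ∈ R.sup id) ∧
    R.sup id ≠ diagRel Z ∧ R.sup id ≠ Finset.univ

/-- A coherent algebra: a subalgebra of the matrix algebra containing the all-ones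
matrix (and the identity), closed under conjugate transpose and Hadamard product. -/
def IsCoherent (𝒜 : Subalgebra ℂ (Matrix Z Z ℂ)) : Prop :=
  allOnes Z ∈ 𝒜 ∧ (∀ M ∈ 𝒜, Mᴴ ∈ 𝒜) ∧
  ∀ M ∈ 𝒜, ∀ N ∈ 𝒜, Matrix.hadamard M N ∈ 𝒜

/-- The one-point-extension algebra: the smallest coherent algebra containing all
adjacency matrices of the scheme and the diagonal matrix unit at `x`. -/
noncomputable def onePointAlg (B : AssocScheme Z) (x : Z) : Subalgebra ℂ (Matrix Z Z ℂ) :=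
  sInf {𝒜 | IsCoherent 𝒜 ∧ (∀ s ∈ B.rels, adjMat s ∈ 𝒜) ∧ eps {x} ∈ 𝒜}

/-- A matrix has only 0/1 entries. -/
def IsZeroOne (M : Matrix Z Z ℂ) : Prop := ∀ i j, M i j = 0 ∨ M i j = 1

/-- A basic relation matrix of a coherent algebra: a nonzero 0/1 matrix in the
algebra whose only 0/1 minorants in the algebra are 0 and itself. -/
def IsBasicMatrix (𝒜 : Subalgebra ℂ (Matrix Z Z ℂ)) (B : Matrix Z Z ℂ) : Prop :=
  B ∈ 𝒜 ∧ IsZeroOne B ∧ B ≠ 0 ∧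
  ∀ C ∈ 𝒜, IsZeroOne C → (∀ i j, C i j = 1 → B i j = 1) → C = 0 ∨ C = B

/-- The Terwilliger algebra of a scheme with respect to the base point `x`. -/
noncomputable def terwAlg (B : AssocScheme Z) (x : Z) : Subalgebra ℂ (Matrix Z Z ℂ) :=
  Algebra.adjoin ℂ
    ({M | ∃ s ∈ B.rels, M = adjMat s} ∪ {M | ∃ s ∈ B.rels, M = eps (pointFiber x s)})

/-- A central primitive idempotent of a (set underlying a) matrix algebra: a nonzero
central idempotent that is not the sum of two nonzero orthogonal central idempotents. -/
def IsCPI {n : Type*} [Fintype n] [DecidableEq n] (𝒜 : Set (Matrix n n ℂ))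
    (e : Matrix n n ℂ) : Prop :=
  e ∈ 𝒜 ∧ e ≠ 0 ∧ e * e = e ∧ (∀ a ∈ 𝒜, a * e = e * a) ∧
  ¬∃ f g : Matrix n n ℂ, f ∈ 𝒜 ∧ g ∈ 𝒜 ∧ f ≠ 0 ∧ g ≠ 0 ∧
    f * f = f ∧ g * g = g ∧ (∀ a ∈ 𝒜, a * f = f * a) ∧ (∀ a ∈ 𝒜, a * g = g * a) ∧
    f * g = 0 ∧ g * f = 0 ∧ e = f + g

/-- The trivial central primitive idempotent
`∑_{s∈S} n_s⁻¹ ε_{x s} J ε_{x s}` of the Terwilliger algebra. -/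
noncomputable def trivTerwIdem (B : AssocScheme Z) (x : Z) : Matrix Z Z ℂ :=
  ∑ s ∈ B.rels, ((valency s : ℂ)⁻¹) •
    (eps (pointFiber x s) * allOnes Z * eps (pointFiber x s))

/-- The adjacency algebra `A(S) = span{σ_s : s ∈ S}` as a set of matrices. -/
def adjAlgSet (B : AssocScheme Z) : Set (Matrix Z Z ℂ) :=
  ↑(Submodule.span ℂ {M | ∃ s ∈ B.rels, M = adjMat s})

end Defs

section Wreath

variable {X Y : Type*} [Fintype X] [DecidableEq X] [Fintype Y] [DecidableEq Y]

/-- Generators of the Terwilliger algebra of the wreath product at `(x₀, y₀)`. -/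
def wreathGens (A : AssocScheme X) (B : AssocScheme Y) (x₀ : X) (y₀ : Y) :
    Set (Matrix (X × Y) (X × Y) ℂ) :=
  {M | ∃ s ∈ A.rels, M = adjMat s ⊗ₖ (1 : Matrix Y Y ℂ)} ∪
  {M | ∃ s ∈ A.rels, M = eps (pointFiber x₀ s) ⊗ₖ eps ({y₀} : Finset Y)} ∪
  {M | ∃ t ∈ B.rels, t ≠ diagRel Y ∧ M = allOnes X ⊗ₖ adjMat t} ∪
  {M | ∃ t ∈ B.rels, t ≠ diagRel Y ∧ M = (1 : Matrix X X ℂ) ⊗ₖ eps (pointFiber y₀ t)}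

/-- The Terwilliger algebra of the wreath product at `(x₀, y₀)`. -/
noncomputable def wreathTerw (A : AssocScheme X) (B : AssocScheme Y) (x₀ : X) (y₀ : Y) :
    Subalgebra ℂ (Matrix (X × Y) (X × Y) ℂ) :=
  Algebra.adjoin ℂ (wreathGens A B x₀ y₀)

/-- The relation `s̃` of the wreath product coming from `s ∈ S`. -/
def tildeRel (s : Finset (X × X)) : Finset ((X × Y) × (X × Y)) :=
  Finset.univ.filter fun p => (p.1.1, p.2.1) ∈ s ∧ p.1.2 = p.2.2

/-- The relation `t̄` of the wreath product coming from `t ∈ T \ {1}`. -/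
def barRel (t : Finset (Y × Y)) : Finset ((X × Y) × (X × Y)) :=
  Finset.univ.filter fun p => (p.1.2, p.2.2) ∈ t

/-- The basic relations of the wreath product `S ≀ T`. -/
def wreathRels (A : AssocScheme X) (B : AssocScheme Y) :
    Finset (Finset ((X × Y) × (X × Y))) :=
  A.rels.image (tildeRel (Y := Y)) ∪ (B.rels.erase (diagRel Y)).image (barRel (X := X))

/-- The trivial central primitive idempotent
`e₀ = ∑_u n_u⁻¹ ε_{(x₀,y₀)u} J ε_{(x₀,y₀)u}` of `T(S ≀ T)`. -/
noncomputable def wreathTriv (A : AssocScheme X) (B : AssocScheme Y) (x₀ : X) (y₀ : Y) :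
    Matrix (X × Y) (X × Y) ℂ :=
  ∑ u ∈ wreathRels A B, ((valency u : ℂ)⁻¹) •
    (eps (pointFiber (x₀, y₀) u) * allOnes (X × Y) * eps (pointFiber (x₀, y₀) u))

/-- `ω = e^{2πi/3}`. -/
noncomputable def omega3 : ℂ := Complex.exp (2 * Real.pi * Complex.I / 3)

/-- The shifted matching matrix `∑_i E_{y_{t(i)}, y_{t'(i+k)}}` on `y₀t × y₀t'`. -/
noncomputable def cyc (enum : Finset (Y × Y) → Fin 3 → Y) (t t' : Finset (Y × Y))
    (k : Fin 3) : Matrix Y Y ℂ :=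
  ∑ i : Fin 3, Matrix.single (enum t i) (enum t' (i + k)) 1

/-- `G_{y₀t, y₀t'}`. -/
noncomputable def Gmat (X : Type*) [Fintype X] (enum : Finset (Y × Y) → Fin 3 → Y)
    (t t' : Finset (Y × Y)) : Matrix (X × Y) (X × Y) ℂ :=
  ((3 * (Fintype.card X : ℂ))⁻¹) •
    (allOnes X ⊗ₖ (cyc enum t t' 0 + omega3 • cyc enum t t' 1 + omega3 ^ 2 • cyc enum t t' 2))

/-- `G'_{y₀t, y₀t'}`. -/
noncomputable def Gmat' (X : Type*) [Fintype X] (enum : Finset (Y × Y) → Fin 3 → Y)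
    (t t' : Finset (Y × Y)) : Matrix (X × Y) (X × Y) ℂ :=
  ((3 * (Fintype.card X : ℂ))⁻¹) •
    (allOnes X ⊗ₖ (cyc enum t t' 0 + omega3 ^ 2 • cyc enum t t' 1 + omega3 • cyc enum t t' 2))

/-- `enum` enumerates each set `y₀t` (for non-identity `t`) by `Fin 3`. -/
def IsEnum (B : AssocScheme Y) (y₀ : Y) (enum : Finset (Y × Y) → Fin 3 → Y) : Prop :=
  ∀ t ∈ B.rels, t ≠ diagRel Y →
    Function.Injective (enum t) ∧ ∀ y, y ∈ pointFiber y₀ t ↔ ∃ i, enum t i = y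

/-- The enumerations are well-ordering: every basic relation matrix of the
one-point-extension algebra which is nonzero on `y₀t × y₀t'` restricts there to one of
the cyclic permutation matrices `I, C, C²`. -/
def IsWellOrdering (B : AssocScheme Y) (y₀ : Y) (enum : Finset (Y × Y) → Fin 3 → Y) : Prop :=
  IsEnum B y₀ enum ∧
  ∀ t ∈ B.rels, t ≠ diagRel Y → ∀ t' ∈ B.rels, t' ≠ diagRel Y →
    ∀ M : Matrix Y Y ℂ, IsBasicMatrix (onePointAlg B y₀) M →
      (∃ i j : Fin 3, M (enum t i) (enum t' j) ≠ 0) →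
      ∃ k : Fin 3, ∀ i j : Fin 3,
        M (enum t i) (enum t' j) = if j = i + k then 1 else 0

/-- The set of all matrices `G_{y₀t, y₀t'}`, `t, t' ∈ T₃`. -/
noncomputable def GmatSet (X : Type*) [Fintype X] (B : AssocScheme Y)
    (enum : Finset (Y × Y) → Fin 3 → Y) : Set (Matrix (X × Y) (X × Y) ℂ) :=
  {M | ∃ t ∈ B.rels.erase (diagRel Y), ∃ t' ∈ B.rels.erase (diagRel Y), M = Gmat X enum t t'}

/-- The set of all matrices `G'_{y₀t, y₀t'}`, `t, t' ∈ T₃`. -/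
noncomputable def GmatSet' (X : Type*) [Fintype X] (B : AssocScheme Y)
    (enum : Finset (Y × Y) → Fin 3 → Y) : Set (Matrix (X × Y) (X × Y) ℂ) :=
  {M | ∃ t ∈ B.rels.erase (diagRel Y), ∃ t' ∈ B.rels.erase (diagRel Y), M = Gmat' X enum t t'}

/-- `e_{η1} = ∑_{t ∈ T₃} G_{y₀t, y₀t}`. -/
noncomputable def etaOne (X : Type*) [Fintype X] (B : AssocScheme Y)
    (enum : Finset (Y × Y) → Fin 3 → Y) : Matrix (X × Y) (X × Y) ℂ :=
  ∑ t ∈ B.rels.erase (diagRel Y), Gmat X enum t t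

/-- `e_{η2} = ∑_{t ∈ T₃} G'_{y₀t, y₀t}`. -/
noncomputable def etaTwo (X : Type*) [Fintype X] (B : AssocScheme Y)
    (enum : Finset (Y × Y) → Fin 3 → Y) : Matrix (X × Y) (X × Y) ℂ :=
  ∑ t ∈ B.rels.erase (diagRel Y), Gmat' X enum t t

end Wreath

/-!
Let `e₀` be the trivial central primitive idempotent of `T(X,S,x₀)` and `J` the all-ones
matrix. Since `J ∈ T(X,S,x₀)` commutes with `e`, we get `eJ = Je = cJ` with `c² = c`; if `c = 1`
then `e` fixes every `ε_{x₀s} J ε_{x₀s}`, so `e e₀ = e₀` and primitivity forces `e = e₀`.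
Hence a nontrivial `e` satisfies `eJ = Je = 0`. Then `e ⊗ ε_{y₀}` commutes with every generator
of `T(S ≀ T)`: the generators `J ⊗ σ_t` kill it because `eJ = Je = 0`, and the generators
`I ⊗ ε_{y₀t}` because `y₀ ∉ y₀t` for `t ≠ 1`. The same computation shows that
`T(S ≀ T) (e ⊗ ε_{y₀}) = (e T(X,S,x₀)) ⊗ ε_{y₀}`, so a splitting of `e ⊗ ε_{y₀}` into orthogonal
central idempotents pulls back to a splitting of `e`.
-/

section Matrices

variable {Z : Type*}

lemma eps_mul_apply [Fintype Z] [DecidableEq Z] (U : Finset Z) (M : Matrix Z Z ℂ) (x y : Z) :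
    (eps U * M) x y = (if x ∈ U then 1 else 0) * M x y :=
  Matrix.diagonal_mul _ _ _ _

lemma mul_eps_apply [Fintype Z] [DecidableEq Z] (U : Finset Z) (M : Matrix Z Z ℂ) (x y : Z) :
    (M * eps U) x y = M x y * (if y ∈ U then 1 else 0) :=
  Matrix.mul_diagonal _ _ _ _

lemma eps_mul_eps [Fintype Z] [DecidableEq Z] (U V : Finset Z) :
    eps U * eps V = eps (U ∩ V) := by
  simp only [eps, Matrix.diagonal_mul_diagonal, Finset.mem_inter, ite_zero_mul_ite_zero,
    mul_one]

lemma eps_mul_self [Fintype Z] [DecidableEq Z] (U : Finset Z) : eps U * eps U = eps U := by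
  rw [eps_mul_eps, Finset.inter_self]

lemma eps_mul_eps_of_disjoint [Fintype Z] [DecidableEq Z] {U V : Finset Z} (h : Disjoint U V) :
    eps U * eps V = 0 := by
  rw [eps_mul_eps, Finset.disjoint_iff_inter_eq_empty.mp h]
  simp [eps]

lemma eps_transpose [DecidableEq Z] (U : Finset Z) : (eps U)ᵀ = eps U :=
  Matrix.diagonal_transpose _

lemma allOnes_transpose : (allOnes Z)ᵀ = allOnes Z := rfl

lemma mem_pointFiber [Fintype Z] [DecidableEq Z] {x y : Z} {s : Finset (Z × Z)} :
    y ∈ pointFiber x s ↔ (x, y) ∈ s := by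
  simp [pointFiber]

lemma mem_convRel [DecidableEq Z] {s : Finset (Z × Z)} {p : Z × Z} :
    p ∈ convRel s ↔ p.swap ∈ s := by
  simp only [convRel, Finset.mem_image]
  exact ⟨fun ⟨q, hq, hqp⟩ => hqp ▸ hq, fun h => ⟨p.swap, h, rfl⟩⟩

lemma exists_mul_allOnes_eq_smul [Fintype Z] [Nonempty Z] {M : Matrix Z Z ℂ}
    (h : M * allOnes Z = allOnes Z * M) : ∃ c : ℂ, M * allOnes Z = c • allOnes Z := by
  obtain ⟨z⟩ := ‹Nonempty Z›
  have hrow : ∀ x y y', (M * allOnes Z) x y = (M * allOnes Z) x y' := by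
    simp [Matrix.mul_apply, allOnes]
  have hcol : ∀ x x' y, (allOnes Z * M) x y = (allOnes Z * M) x' y := by
    simp [Matrix.mul_apply, allOnes]
  refine ⟨(M * allOnes Z) z z, Matrix.ext fun x y => ?_⟩
  calc (M * allOnes Z) x y = (allOnes Z * M) x z := by rw [hrow x y z, h]
    _ = (M * allOnes Z) z z := by rw [hcol x z z, h]
    _ = ((M * allOnes Z) z z • allOnes Z) x y := by simp [allOnes]

lemma mul_allOnes_eq_zero_or_eq [Fintype Z] [Nonempty Z] {e : Matrix Z Z ℂ} (hidem : e * e = e)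
    (hcomm : e * allOnes Z = allOnes Z * e) :
    e * allOnes Z = 0 ∨ e * allOnes Z = allOnes Z := by
  obtain ⟨c, hc⟩ := exists_mul_allOnes_eq_smul hcomm
  have hJ : allOnes Z ≠ 0 := by
    obtain ⟨z⟩ := ‹Nonempty Z›
    exact fun h => one_ne_zero (congrFun (congrFun h z) z)
  have hcc : IsIdempotentElem c := smul_left_injective ℂ hJ <| by
    calc (c * c) • allOnes Z = e * (e * allOnes Z) := by rw [hc, mul_smul_comm, hc, smul_smul]
      _ = c • allOnes Z := by rw [← mul_assoc, hidem, hc]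
  rcases IsIdempotentElem.iff_eq_zero_or_one.mp hcc with rfl | rfl
  · exact Or.inl (by rw [hc, zero_smul])
  · exact Or.inr (by rw [hc, one_smul])

end Matrices

namespace IsCPI

variable {m n : Type*} [Fintype m] [DecidableEq m] [Fintype n] [DecidableEq n]

lemma eq_of_mul_eq {S : Subalgebra ℂ (Matrix n n ℂ)} {e f : Matrix n n ℂ}
    (he : IsCPI (S : Set (Matrix n n ℂ)) e) (hfS : f ∈ S) (hf0 : f ≠ 0) (hff : f * f = f)
    (hfc : ∀ a ∈ S, a * f = f * a) (hef : e * f = f) : f = e := by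
  obtain ⟨heS, -, hee, hec, hprim⟩ := he
  by_contra hne
  have hfe : f * e = f := by rw [hec f hfS, hef]
  refine hprim ⟨f, e - f, hfS, sub_mem heS hfS, hf0, sub_ne_zero.mpr (Ne.symm hne), hff,
    ?_, hfc, fun a ha => ?_, ?_, ?_, (add_sub_cancel f e).symm⟩
  · rw [mul_sub, sub_mul, sub_mul, hee, hef, hfe, hff, sub_self, sub_zero]
  · rw [mul_sub, sub_mul, hec a ha, hfc a ha]
  · rw [mul_sub, hfe, hff, sub_self]
  · rw [sub_mul, hef, hff, sub_self]

lemma map {F : Type*} [FunLike F (Matrix m m ℂ) (Matrix n n ℂ)]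
    [NonUnitalRingHomClass F (Matrix m m ℂ) (Matrix n n ℂ)]
    {𝒜 : Set (Matrix m m ℂ)} {ℬ : Set (Matrix n n ℂ)} {e : Matrix m m ℂ}
    (he : IsCPI 𝒜 e) (φ : F) (hφ : Function.Injective φ) (hmap : ∀ a ∈ 𝒜, φ a ∈ ℬ)
    (hcomm : ∀ b ∈ ℬ, b * φ e = φ e * b) (hcorner : ∀ b ∈ ℬ, ∃ a ∈ 𝒜, b * φ e = φ a) :
    IsCPI ℬ (φ e) := by
  obtain ⟨heA, he0, hee, -, hprim⟩ := he
  refine ⟨hmap e heA, (map_ne_zero_iff φ hφ).mpr he0, by rw [← map_mul, hee], hcomm, ?_⟩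
  rintro ⟨f, g, hf, hg, hf0, hg0, hff, hgg, hfc, hgc, hfg, hgf, hsum⟩
  obtain ⟨a, ha, hfa⟩ := hcorner f hf
  obtain ⟨b, hb, hgb⟩ := hcorner g hg
  rw [hsum, mul_add, hff, hfg, add_zero] at hfa
  rw [hsum, mul_add, hgf, zero_add, hgg] at hgb
  subst hfa hgb
  refine hprim ⟨a, b, ha, hb, fun h => hf0 (by rw [h, map_zero]),
    fun h => hg0 (by rw [h, map_zero]), hφ (by rw [map_mul, hff]), hφ (by rw [map_mul, hgg]),
    fun c hc => hφ ?_, fun c hc => hφ ?_, hφ (by rw [map_mul, hfg, map_zero]),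
    hφ (by rw [map_mul, hgf, map_zero]), hφ (by rw [map_add, hsum])⟩
  · rw [map_mul, map_mul, hfc _ (hmap c hc)]
  · rw [map_mul, map_mul, hgc _ (hmap c hc)]

end IsCPI

namespace AssocScheme

variable {X : Type*} [Fintype X] [DecidableEq X] (A : AssocScheme X)

lemma eq_of_mem_of_mem {s t : Finset (X × X)} (hs : s ∈ A.rels) (ht : t ∈ A.rels)
    {p : X × X} (hps : p ∈ s) (hpt : p ∈ t) : s = t := by
  by_contra h
  exact Finset.disjoint_left.mp (A.pairwise_disjoint s hs t ht h) hps hpt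

noncomputable def relOf (p : X × X) : Finset (X × X) := (A.cover p).choose

lemma relOf_mem (p : X × X) : A.relOf p ∈ A.rels := (A.cover p).choose_spec.1

lemma mem_relOf (p : X × X) : p ∈ A.relOf p := (A.cover p).choose_spec.2

lemma relOf_eq_iff {s : Finset (X × X)} (hs : s ∈ A.rels) {p : X × X} :
    A.relOf p = s ↔ p ∈ s :=
  ⟨fun h => h ▸ A.mem_relOf p, A.eq_of_mem_of_mem (A.relOf_mem p) hs (A.mem_relOf p)⟩

lemma filter_mem_rels (p : X × X) : A.rels.filter (p ∈ ·) = {A.relOf p} := by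
  ext s
  simp only [Finset.mem_filter, Finset.mem_singleton]
  exact ⟨fun ⟨hs, hp⟩ => ((A.relOf_eq_iff hs).mpr hp).symm,
    fun h => h ▸ ⟨A.relOf_mem p, A.mem_relOf p⟩⟩

lemma sum_ite_mem (p : X × X) : ∑ s ∈ A.rels, (if p ∈ s then (1 : ℂ) else 0) = 1 := by
  rw [Finset.sum_boole, filter_mem_rels, Finset.card_singleton, Nat.cast_one]

lemma self_notMem_pointFiber {t : Finset (X × X)} (ht : t ∈ A.rels) (htne : t ≠ diagRel X)
    (x : X) : x ∉ pointFiber x t := fun hx =>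
  htne (A.eq_of_mem_of_mem ht A.id_mem (mem_pointFiber.mp hx) (by simp [diagRel]))

lemma card_filter_pointFiber_eq {s t u : Finset (X × X)} (hs : s ∈ A.rels) (ht : t ∈ A.rels)
    (hu : u ∈ A.rels) {p q : X × X} (hp : p ∈ u) (hq : q ∈ u) :
    ((pointFiber p.1 s).filter fun z => (z, p.2) ∈ t).card =
      ((pointFiber q.1 s).filter fun z => (z, q.2) ∈ t).card := by
  simpa only [pointFiber, Finset.filter_filter] using A.pconst s hs t ht u hu p hp q hq

lemma card_pointFiber {s : Finset (X × X)} (hs : s ∈ A.rels) (x : X) :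
    (pointFiber x s).card = valency s := by
  have hd := A.nonempty_mem _ A.id_mem
  have key := A.card_filter_pointFiber_eq hs (A.conv_mem s hs) A.id_mem
    (p := (x, x)) (by simp [diagRel]) hd.choose_spec
  rw [Finset.filter_true_of_mem fun z hz => mem_convRel.mpr (mem_pointFiber.mp hz)] at key
  rw [key, valency, pNum, dif_pos hd, pointFiber, Finset.filter_filter]

lemma valency_pos {s : Finset (X × X)} (hs : s ∈ A.rels) : 0 < valency s := by
  obtain ⟨⟨a, b⟩, hab⟩ := A.nonempty_mem s hs
  rw [← A.card_pointFiber hs a]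
  exact Finset.card_pos.mpr ⟨b, mem_pointFiber.mpr hab⟩

lemma valency_ne_zero {s : Finset (X × X)} (hs : s ∈ A.rels) : (valency s : ℂ) ≠ 0 :=
  Nat.cast_ne_zero.mpr (A.valency_pos hs).ne'

/-- Double counting the `u`-edges between `x₀r` and `x₀q`. -/
lemma valency_mul_card_filter_eq {r q u : Finset (X × X)} (hr : r ∈ A.rels) (hq : q ∈ A.rels)
    (hu : u ∈ A.rels) {x₀ x y : X} (hx : (x₀, x) ∈ r) (hy : (x₀, y) ∈ q) :
    valency r * ((pointFiber x₀ q).filter fun z => (x, z) ∈ u).card =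
      valency q * ((pointFiber x₀ r).filter fun z => (z, y) ∈ u).card := by
  rw [← A.card_pointFiber hr x₀, ← A.card_pointFiber hq x₀]
  refine Finset.card_mul_eq_card_mul (fun a b => (a, b) ∈ u) (fun a ha => ?_)
    fun b hb => A.card_filter_pointFiber_eq hr hu hq (mem_pointFiber.mp hb) hy
  have h := A.card_filter_pointFiber_eq hq (A.conv_mem u hu) hr (mem_pointFiber.mp ha) hx
  simpa only [mem_convRel, Prod.swap_prod_mk, Finset.bipartiteAbove] using h

lemma sum_adjMat : ∑ s ∈ A.rels, adjMat s = allOnes X := by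
  ext x y
  simp [Matrix.sum_apply, adjMat, A.sum_ite_mem, allOnes]

lemma sum_eps_pointFiber (x₀ : X) : ∑ s ∈ A.rels, eps (pointFiber x₀ s) = 1 := by
  ext x y
  by_cases hxy : x = y
  · subst hxy
    simp [Matrix.sum_apply, eps, mem_pointFiber, A.sum_ite_mem]
  · simp [Matrix.sum_apply, eps, hxy]

variable (x₀ : X)

lemma adjMat_mem_terwAlg {s : Finset (X × X)} (hs : s ∈ A.rels) : adjMat s ∈ terwAlg A x₀ :=
  Algebra.subset_adjoin (Or.inl ⟨s, hs, rfl⟩)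

lemma eps_pointFiber_mem_terwAlg {s : Finset (X × X)} (hs : s ∈ A.rels) :
    eps (pointFiber x₀ s) ∈ terwAlg A x₀ :=
  Algebra.subset_adjoin (Or.inr ⟨s, hs, rfl⟩)

lemma allOnes_mem_terwAlg : allOnes X ∈ terwAlg A x₀ :=
  A.sum_adjMat ▸ Subalgebra.sum_mem _ fun _ hs => A.adjMat_mem_terwAlg x₀ hs

lemma trivTerwIdem_mem : trivTerwIdem A x₀ ∈ terwAlg A x₀ :=
  Subalgebra.sum_mem _ fun _ hs => Subalgebra.smul_mem _ (mul_mem (mul_mem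
    (A.eps_pointFiber_mem_terwAlg x₀ hs) (A.allOnes_mem_terwAlg x₀))
    (A.eps_pointFiber_mem_terwAlg x₀ hs)) _

lemma trivTerwIdem_apply (x y : X) :
    trivTerwIdem A x₀ x y =
      if (x₀, y) ∈ A.relOf (x₀, x) then (valency (A.relOf (x₀, x)) : ℂ)⁻¹ else 0 := by
  rw [trivTerwIdem, Matrix.sum_apply, Finset.sum_eq_single (A.relOf (x₀, x))]
  · simp [eps_mul_apply, mul_eps_apply, allOnes, mem_pointFiber, A.mem_relOf]
  · intro s hs hne
    have hx : (x₀, x) ∉ s := fun h => hne ((A.relOf_eq_iff hs).mpr h).symm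
    simp [eps_mul_apply, mul_eps_apply, mem_pointFiber, hx]
  · exact fun h => absurd (A.relOf_mem _) h

lemma trivTerwIdem_transpose : (trivTerwIdem A x₀)ᵀ = trivTerwIdem A x₀ := by
  simp only [trivTerwIdem, Matrix.transpose_sum, Matrix.transpose_smul, Matrix.transpose_mul,
    eps_transpose, allOnes_transpose, mul_assoc]

lemma sum_trivTerwIdem_mul (x : X) (f : X → ℂ) :
    ∑ z, trivTerwIdem A x₀ x z * f z =
      (valency (A.relOf (x₀, x)) : ℂ)⁻¹ * ∑ z ∈ pointFiber x₀ (A.relOf (x₀, x)), f z := by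
  rw [pointFiber, Finset.sum_filter, Finset.mul_sum]
  simp only [trivTerwIdem_apply, ite_mul, zero_mul, mul_ite, mul_zero]

lemma trivTerwIdem_mul_self : trivTerwIdem A x₀ * trivTerwIdem A x₀ = trivTerwIdem A x₀ := by
  ext x y
  have hr := A.relOf_mem (x₀, x)
  have hblock : ∀ z ∈ pointFiber x₀ (A.relOf (x₀, x)),
      trivTerwIdem A x₀ z y = trivTerwIdem A x₀ x y := fun z hz => by
    rw [trivTerwIdem_apply, trivTerwIdem_apply, (A.relOf_eq_iff hr).mpr (mem_pointFiber.mp hz)]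
  rw [Matrix.mul_apply, sum_trivTerwIdem_mul, Finset.sum_congr rfl hblock, Finset.sum_const,
    A.card_pointFiber hr, nsmul_eq_mul, ← mul_assoc, inv_mul_cancel₀ (A.valency_ne_zero hr),
    one_mul]

lemma trivTerwIdem_ne_zero : trivTerwIdem A x₀ ≠ 0 := fun h => by
  have hentry := congrFun (congrFun h x₀) x₀
  rw [trivTerwIdem_apply, if_pos (A.mem_relOf _), Matrix.zero_apply] at hentry
  exact inv_ne_zero (A.valency_ne_zero (A.relOf_mem _)) hentry

lemma trivTerwIdem_commute_adjMat {u : Finset (X × X)} (hu : u ∈ A.rels) :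
    Commute (trivTerwIdem A x₀) (adjMat u) := by
  ext x y
  have hr := A.relOf_mem (x₀, x)
  have hq := A.relOf_mem (x₀, y)
  have hcount := A.valency_mul_card_filter_eq hr hq hu (A.mem_relOf (x₀, x)) (A.mem_relOf (x₀, y))
  have hsymm : ∀ z, trivTerwIdem A x₀ z y = trivTerwIdem A x₀ y z := fun z =>
    congrFun (congrFun (A.trivTerwIdem_transpose x₀) y) z
  simp only [Matrix.mul_apply, hsymm, mul_comm (adjMat u x _)]
  simp only [sum_trivTerwIdem_mul, adjMat, Matrix.of_apply, Finset.sum_boole]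
  have hcountC : (valency (A.relOf (x₀, x)) : ℂ) *
      ((pointFiber x₀ (A.relOf (x₀, y))).filter fun z => (x, z) ∈ u).card =
      valency (A.relOf (x₀, y)) *
      ((pointFiber x₀ (A.relOf (x₀, x))).filter fun z => (z, y) ∈ u).card := by
    exact_mod_cast hcount
  field_simp [A.valency_ne_zero hr, A.valency_ne_zero hq]
  linear_combination -hcountC

lemma trivTerwIdem_commute_eps {u : Finset (X × X)} (hu : u ∈ A.rels) :
    Commute (trivTerwIdem A x₀) (eps (pointFiber x₀ u)) := by
  ext x y
  rw [mul_eps_apply, eps_mul_apply, trivTerwIdem_apply]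
  by_cases hxy : (x₀, y) ∈ A.relOf (x₀, x)
  · have hsame : (x₀, x) ∈ u ↔ (x₀, y) ∈ u := by
      rw [← A.relOf_eq_iff hu, ← A.relOf_eq_iff hu,
        (A.relOf_eq_iff (A.relOf_mem (x₀, x))).mpr hxy]
    simp [hxy, mem_pointFiber, hsame]
  · simp [hxy]

lemma trivTerwIdem_commute {a : Matrix X X ℂ} (ha : a ∈ terwAlg A x₀) :
    Commute (trivTerwIdem A x₀) a := by
  refine Algebra.commute_of_mem_adjoin_of_forall_mem_commute ha ?_
  rintro b (⟨s, hs, rfl⟩ | ⟨s, hs, rfl⟩)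
  exacts [A.trivTerwIdem_commute_adjMat x₀ hs, A.trivTerwIdem_commute_eps x₀ hs]

end AssocScheme

lemma IsCPI.mul_allOnes_eq_zero {X : Type*} [Fintype X] [DecidableEq X] {A : AssocScheme X}
    {x₀ : X} {e : Matrix X X ℂ} (he : IsCPI (terwAlg A x₀ : Set (Matrix X X ℂ)) e)
    (hne : e ≠ trivTerwIdem A x₀) : e * allOnes X = 0 := by
  have : Nonempty X := ⟨x₀⟩
  have hcomm : ∀ a ∈ terwAlg A x₀, a * e = e * a := he.2.2.2.1
  refine (mul_allOnes_eq_zero_or_eq he.2.2.1 (hcomm _ (A.allOnes_mem_terwAlg x₀)).symm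
    ).resolve_right fun heJ => hne ?_
  refine (he.eq_of_mul_eq (A.trivTerwIdem_mem x₀) (A.trivTerwIdem_ne_zero x₀)
    (A.trivTerwIdem_mul_self x₀) (fun a ha => (A.trivTerwIdem_commute x₀ ha).eq.symm) ?_).symm
  rw [trivTerwIdem, Finset.mul_sum]
  refine Finset.sum_congr rfl fun s hs => ?_
  rw [mul_smul_comm, ← mul_assoc, ← mul_assoc, ← hcomm _ (A.eps_pointFiber_mem_terwAlg x₀ hs),
    mul_assoc (eps _) e, heJ]

section WreathCorner

variable {X Y : Type*} [Fintype X] [Fintype Y] [DecidableEq Y]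

def kronEps (y₀ : Y) : Matrix X X ℂ →ₙₐ[ℂ] Matrix (X × Y) (X × Y) ℂ where
  toFun c := c ⊗ₖ eps {y₀}
  map_smul' r c := Matrix.smul_kronecker r c _
  map_zero' := Matrix.zero_kronecker _
  map_add' a b := Matrix.add_kronecker a b _
  map_mul' a b := by rw [← Matrix.mul_kronecker_mul, eps_mul_self]

lemma kronEps_apply (y₀ : Y) (c : Matrix X X ℂ) : kronEps y₀ c = c ⊗ₖ eps {y₀} := rfl

lemma kronEps_injective (y₀ : Y) : Function.Injective (kronEps (X := X) y₀) := fun a b h => by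
  ext i j
  simpa [kronEps_apply, eps] using congrFun (congrFun h (i, y₀)) (j, y₀)

variable [DecidableEq X] (A : AssocScheme X) (B : AssocScheme Y) (x₀ : X) (y₀ : Y)

lemma kronEps_one_mem_wreathTerw : kronEps y₀ 1 ∈ wreathTerw A B x₀ y₀ := by
  rw [← A.sum_eps_pointFiber x₀, map_sum]
  exact Subalgebra.sum_mem _ fun s hs =>
    Algebra.subset_adjoin (Or.inl (Or.inl (Or.inr ⟨s, hs, rfl⟩)))

lemma kronEps_mem_wreathTerw {c : Matrix X X ℂ} (hc : c ∈ terwAlg A x₀) :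
    kronEps y₀ c ∈ wreathTerw A B x₀ y₀ := by
  induction hc using Algebra.adjoin_induction with
  | mem c hc =>
    rcases hc with ⟨s, hs, rfl⟩ | ⟨s, hs, rfl⟩
    · have h : kronEps y₀ (adjMat s) = (adjMat s ⊗ₖ (1 : Matrix Y Y ℂ)) * kronEps y₀ 1 := by
        rw [kronEps_apply, kronEps_apply, ← Matrix.mul_kronecker_mul, mul_one, one_mul]
      rw [h]
      exact mul_mem (Algebra.subset_adjoin (Or.inl (Or.inl (Or.inl ⟨s, hs, rfl⟩))))
        (kronEps_one_mem_wreathTerw A B x₀ y₀)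
    · exact Algebra.subset_adjoin (Or.inl (Or.inl (Or.inr ⟨s, hs, rfl⟩)))
  | algebraMap r =>
    rw [Algebra.algebraMap_eq_smul_one, map_smul]
    exact Subalgebra.smul_mem _ (kronEps_one_mem_wreathTerw A B x₀ y₀) r
  | add a b _ _ ha hb => exact (map_add (kronEps y₀) a b) ▸ add_mem ha hb
  | mul a b _ _ ha hb => exact (map_mul (kronEps y₀) a b) ▸ mul_mem ha hb

variable {A B x₀ y₀}

lemma commute_kronEps {e : Matrix X X ℂ} {b : Matrix (X × Y) (X × Y) ℂ}
    (hcomm : ∀ a ∈ terwAlg A x₀, a * e = e * a)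
    (heJ : e * allOnes X = 0) (hJe : allOnes X * e = 0) (hb : b ∈ wreathTerw A B x₀ y₀) :
    Commute (kronEps y₀ e) b := by
  refine Algebra.commute_of_mem_adjoin_of_forall_mem_commute hb ?_
  rintro g (((⟨s, hs, rfl⟩ | ⟨s, hs, rfl⟩) | ⟨t, ht, htne, rfl⟩) | ⟨t, ht, htne, rfl⟩) <;>
    simp only [Commute, SemiconjBy, kronEps_apply, ← Matrix.mul_kronecker_mul]
  · rw [one_mul, mul_one, hcomm _ (A.adjMat_mem_terwAlg x₀ hs)]
  · rw [eps_mul_self, hcomm _ (A.eps_pointFiber_mem_terwAlg x₀ hs)]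
  · rw [heJ, hJe, Matrix.zero_kronecker, Matrix.zero_kronecker]
  · have hdisj : Disjoint {y₀} (pointFiber y₀ t) :=
      Finset.disjoint_singleton_left.mpr (B.self_notMem_pointFiber ht htne y₀)
    rw [one_mul, mul_one, eps_mul_eps_of_disjoint hdisj, eps_mul_eps_of_disjoint hdisj.symm]

lemma exists_mul_kronEps_eq {e : Matrix X X ℂ} {b : Matrix (X × Y) (X × Y) ℂ}
    (hcomm : ∀ a ∈ terwAlg A x₀, a * e = e * a)
    (hJe : allOnes X * e = 0) (hb : b ∈ wreathTerw A B x₀ y₀) :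
    ∀ d ∈ terwAlg A x₀, ∃ d' ∈ terwAlg A x₀, b * kronEps y₀ (e * d) = kronEps y₀ (e * d') := by
  induction hb using Algebra.adjoin_induction with
  | mem g hg =>
    intro d hd
    rcases hg with (((⟨s, hs, rfl⟩ | ⟨s, hs, rfl⟩) | ⟨t, ht, htne, rfl⟩) | ⟨t, ht, htne, rfl⟩)
    · refine ⟨adjMat s * d, mul_mem (A.adjMat_mem_terwAlg x₀ hs) hd, ?_⟩
      rw [kronEps_apply, kronEps_apply, ← Matrix.mul_kronecker_mul, one_mul, ← mul_assoc,
        hcomm _ (A.adjMat_mem_terwAlg x₀ hs), mul_assoc]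
    · refine ⟨eps (pointFiber x₀ s) * d, mul_mem (A.eps_pointFiber_mem_terwAlg x₀ hs) hd, ?_⟩
      rw [← kronEps_apply, ← map_mul, ← mul_assoc,
        hcomm _ (A.eps_pointFiber_mem_terwAlg x₀ hs), mul_assoc]
    · refine ⟨0, zero_mem _, ?_⟩
      rw [kronEps_apply, kronEps_apply, ← Matrix.mul_kronecker_mul, ← mul_assoc, hJe,
        zero_mul, mul_zero, Matrix.zero_kronecker, Matrix.zero_kronecker]
    · refine ⟨0, zero_mem _, ?_⟩
      rw [kronEps_apply, kronEps_apply, ← Matrix.mul_kronecker_mul, eps_mul_eps_of_disjoint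
        (Finset.disjoint_singleton_right.mpr (B.self_notMem_pointFiber ht htne y₀)),
        Matrix.kronecker_zero, mul_zero, Matrix.zero_kronecker]
  | algebraMap r =>
    intro d hd
    refine ⟨r • d, Subalgebra.smul_mem _ hd r, ?_⟩
    rw [Algebra.algebraMap_eq_smul_one, smul_mul_assoc, one_mul, mul_smul_comm, map_smul]
  | add a b _ _ ha hb =>
    intro d hd
    obtain ⟨d₁, hd₁, h₁⟩ := ha d hd
    obtain ⟨d₂, hd₂, h₂⟩ := hb d hd
    exact ⟨d₁ + d₂, add_mem hd₁ hd₂, by rw [add_mul, h₁, h₂, ← map_add, mul_add]⟩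
  | mul a b _ _ ha hb =>
    intro d hd
    obtain ⟨d₁, hd₁, h₁⟩ := hb d hd
    obtain ⟨d₂, hd₂, h₂⟩ := ha d₁ hd₁
    exact ⟨d₂, hd₂, by rw [mul_assoc, h₁, h₂]⟩

end WreathCorner

section Statements

variable {X Y : Type*} [Fintype X] [DecidableEq X] [Fintype Y] [DecidableEq Y]

theorem stmt9_general (A : AssocScheme X) (B : AssocScheme Y)
    (x₀ : X) (y₀ : Y) (e : Matrix X X ℂ)
    (he : IsCPI (terwAlg A x₀ : Set (Matrix X X ℂ)) e)
    (hne : e ≠ trivTerwIdem A x₀) :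
    IsCPI (wreathTerw A B x₀ y₀ : Set (Matrix (X × Y) (X × Y) ℂ))
      (e ⊗ₖ eps ({y₀} : Finset Y)) := by
  have hcomm : ∀ a ∈ terwAlg A x₀, a * e = e * a := he.2.2.2.1
  have heJ : e * allOnes X = 0 := he.mul_allOnes_eq_zero hne
  have hJe : allOnes X * e = 0 := by rw [hcomm _ (A.allOnes_mem_terwAlg x₀), heJ]
  refine he.map (kronEps y₀) (kronEps_injective y₀)
    (fun a ha => kronEps_mem_wreathTerw A B x₀ y₀ ha)
    (fun b hb => (commute_kronEps hcomm heJ hJe hb).eq.symm) fun b hb => ?_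
  obtain ⟨d, hd, hbd⟩ := exists_mul_kronEps_eq hcomm hJe hb 1 (one_mem _)
  exact ⟨e * d, mul_mem he.1 hd, by rwa [mul_one] at hbd⟩

theorem stmt9 (A : AssocScheme X) (B : AssocScheme Y) (h3 : ThreeEquivalenced B)
    (x₀ : X) (y₀ : Y) (e : Matrix X X ℂ)
    (he : IsCPI (terwAlg A x₀ : Set (Matrix X X ℂ)) e)
    (hne : e ≠ trivTerwIdem A x₀) :
    IsCPI (wreathTerw A B x₀ y₀ : Set (Matrix (X × Y) (X × Y) ℂ))
      (e ⊗ₖ eps ({y₀} : Finset Y)) :=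
  stmt9_general A B x₀ y₀ e he hne

end Statements
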